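/- arXiv:2107.13850 — 2 statements merged into one kernel-verified Lean document; each statement's English description precedes it below -/
import Mathlib

section
/- Let A be a unital C*-algebra, E a Hilbert A-module, and suppose {g₁,…,gₙ} ⊆ E is such that the frame operator Sf = ∑_{j=1}^n ⟨f, g_j⟩ g_j equals the identity (i.e., a Parseval frame). If g₁′,…,gₙ′ ∈ E satisfy ‖g_j − g_j′‖ < δ where δ = min{1, ((2M+1)n)⁻¹} and M = max_j ‖g_j‖, then the frame operator S′f = ∑_j ⟨f, g_j′⟩ g_j′ is invertible in L_A(E), and hence {g₁′,…,gₙ′} is a generating set for E. -/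
/-!
Write `S'` for the frame operator of `g'`. Since the frame operator of `g` is the identity,
`f - S' f = ∑ⱼ (⟨f, gⱼ⟩ gⱼ - ⟨f, gⱼ'⟩ gⱼ')`, and the Cauchy–Schwarz inequality bounds each term
by `(‖gⱼ‖ + ‖gⱼ'‖) ‖gⱼ - gⱼ'‖ ‖f‖ ≤ (2M + 1) ‖gⱼ - gⱼ'‖ ‖f‖ < ‖f‖ / n`. So `id - S'` is a
contraction and `S'` is bijective by the Banach fixed point theorem; each `f = S' h` is then the
combination `∑ⱼ ⟨h, gⱼ'⟩ gⱼ'`.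

Cauchy–Schwarz in a Hilbert C⋆-module needs `star` on `A` to be conjugate-linear, and the star
order forces this: `a = I • 1 + star (I • 1)` and `I • a` are both self-adjoint, so `a * a` and
`-(a * a)` are both nonnegative, whence `a = 0`.
-/

open scoped ComplexOrder NNReal

section StarModule

variable {A : Type*} [NormedRing A] [StarRing A] [CStarRing A]

theorem eq_zero_of_isSelfAdjoint_of_isSelfAdjoint_I_smul [Algebra ℂ A] [PartialOrder A]
    [StarOrderedRing A] {a : A} (ha : IsSelfAdjoint a) (hIa : IsSelfAdjoint (Complex.I • a)) :
    a = 0 := by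
  have h_sq_nonneg : 0 ≤ a * a := by simpa [ha.star_eq] using star_mul_self_nonneg a
  have h_neg_sq_nonneg : 0 ≤ -(a * a) := by
    have := star_mul_self_nonneg (Complex.I • a)
    rwa [hIa.star_eq, smul_mul_smul_comm, Complex.I_mul_I, neg_one_smul] at this
  have h_sq : star a * a = 0 := by
    rw [ha.star_eq]; exact le_antisymm (neg_nonneg.1 h_neg_sq_nonneg) h_sq_nonneg
  exact (CStarRing.star_mul_self_eq_zero_iff a).1 h_sq

theorem star_I_smul_one [Algebra ℂ A] [PartialOrder A] [StarOrderedRing A] :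
    star (Complex.I • (1 : A)) = -(Complex.I • 1) := by
  refine eq_neg_of_add_eq_zero_right (eq_zero_of_isSelfAdjoint_of_isSelfAdjoint_I_smul
    (a := Complex.I • 1 + star (Complex.I • (1 : A))) ?_ ?_)
  · simp [IsSelfAdjoint, add_comm]
  · have : Complex.I • (Complex.I • 1 + star (Complex.I • (1 : A)))
        = -1 + Complex.I • 1 * star (Complex.I • (1 : A)) := by
      rw [smul_add, smul_smul, Complex.I_mul_I, neg_one_smul, smul_one_mul]
    rw [this]
    exact (IsSelfAdjoint.one A).neg.add (IsSelfAdjoint.mul_star_self _)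

theorem star_real_smul [NormedAlgebra ℂ A] (r : ℝ) (a : A) : star (r • a) = r • star a :=
  map_real_smul (starAddEquiv : A ≃+ A) continuous_star r a

theorem starModule_complex_of_starOrderedRing [NormedAlgebra ℂ A] [PartialOrder A]
    [StarOrderedRing A] : StarModule ℂ A where
  star_smul z a := by
    have h_one : star (z • (1 : A)) = star z • 1 := by
      have hz : ∀ w : ℂ, w • (1 : A) = w.re • 1 + w.im • Complex.I • 1 := fun w => by
        rw [← Complex.coe_smul, ← Complex.coe_smul, smul_smul, ← add_smul, Complex.re_add_im]
      rw [hz z, hz (star z), star_add, star_real_smul, star_real_smul, star_one, star_I_smul_one]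
      simp
    rw [← smul_one_mul, star_mul, h_one, mul_smul_one]

end StarModule

theorem Function.bijective_of_lipschitzWith_id_sub {E : Type*} [NormedAddCommGroup E]
    [CompleteSpace E] {T : E → E} {K : ℝ≥0} (hK : K < 1)
    (hT : LipschitzWith K fun x => x - T x) : Function.Bijective T := by
  refine ⟨fun x y hxy => ?_, fun y => ?_⟩
  · have h_le : dist x y ≤ K * dist x y := by
      simpa [hxy] using hT.dist_le_mul x y
    exact dist_le_zero.1 (by nlinarith [dist_nonneg (x := x) (y := y), show (K : ℝ) < 1 from hK])
  · -- `T f = y` exactly when `f` is a fixed point of the contraction `f ↦ y + (f - T f)`.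
    have hΦ : ContractingWith K fun f => y + (f - T f) :=
      ⟨hK, LipschitzWith.of_dist_le_mul fun a b => by
        simpa only [dist_add_left] using hT.dist_le_mul a b⟩
    have : Nonempty E := ⟨y⟩
    have h_fixed : y + (hΦ.fixedPoint - T hΦ.fixedPoint) = hΦ.fixedPoint :=
      hΦ.fixedPoint_isFixedPt
    rw [add_sub_left_comm, add_eq_left, sub_eq_zero] at h_fixed
    exact ⟨hΦ.fixedPoint, h_fixed.symm⟩

structure IsLeftHilbertInner {A E : Type*} [Ring A] [StarRing A] [PartialOrder A] [Norm A]
    [AddCommGroup E] [Module A E] [Norm E] (ip : E → E → A) : Prop where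
  add_left : ∀ f g h : E, ip (f + g) h = ip f h + ip g h
  smul_left : ∀ (c : A) (f g : E), ip (c • f) g = c * ip f g
  star_ip : ∀ f g : E, star (ip f g) = ip g f
  ip_self_nonneg : ∀ f : E, 0 ≤ ip f f
  norm_eq_sqrt : ∀ f : E, ‖f‖ = √‖ip f f‖

def frameOperator {A E ι : Type*} [Fintype ι] [Semiring A] [AddCommMonoid E] [Module A E]
    (ip : E → E → A) (g : ι → E) (f : E) : E :=
  ∑ j, ip f (g j) • g j

namespace IsLeftHilbertInner

section Algebraic

variable {A E : Type*} [Ring A] [StarRing A] [PartialOrder A] [Norm A]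
  [AddCommGroup E] [Module A E] [Norm E] {ip : E → E → A}

theorem ip_sub_left (hip : IsLeftHilbertInner ip) (f g h : E) :
    ip (f - g) h = ip f h - ip g h :=
  map_sub (AddMonoidHom.mk' (ip · h) (hip.add_left · · h)) f g

theorem ip_sub_right (hip : IsLeftHilbertInner ip) (f g h : E) :
    ip f (g - h) = ip f g - ip f h := by
  rw [← hip.star_ip, hip.ip_sub_left, star_sub, hip.star_ip, hip.star_ip]

theorem ip_smul_right (hip : IsLeftHilbertInner ip) (c : A) (f g : E) :
    ip f (c • g) = ip f g * star c := by
  rw [← hip.star_ip, hip.smul_left, star_mul, hip.star_ip]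

theorem frameOperator_sub (hip : IsLeftHilbertInner ip) {ι : Type*} [Fintype ι] (g : ι → E)
    (x y : E) :
    frameOperator ip g (x - y) = frameOperator ip g x - frameOperator ip g y := by
  simp only [frameOperator, hip.ip_sub_left, sub_smul, Finset.sum_sub_distrib]

end Algebraic

section Normed

variable {A E : Type*} [NormedRing A] [StarRing A] [CStarRing A] [PartialOrder A]
  [NormedAddCommGroup E] [Module A E] {ip : E → E → A}

theorem norm_smul_le (hip : IsLeftHilbertInner ip) (c : A) (f : E) : ‖c • f‖ ≤ ‖c‖ * ‖f‖ := by
  have h_sq : ‖c • f‖ ^ 2 ≤ (‖c‖ * ‖f‖) ^ 2 := by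
    rw [mul_pow]
    simp only [sq, hip.norm_eq_sqrt, Real.mul_self_sqrt (norm_nonneg _)]
    calc ‖ip (c • f) (c • f)‖ = ‖c * ip f f * star c‖ := by
          rw [hip.smul_left, hip.ip_smul_right, mul_assoc]
      _ ≤ ‖c‖ * ‖ip f f‖ * ‖star c‖ := norm_mul₃_le
      _ = ‖c‖ * ‖c‖ * ‖ip f f‖ := by rw [norm_star]; ring
  exact pow_le_pow_iff_left₀ (norm_nonneg _) (by positivity) two_ne_zero |>.1 h_sq

end Normed

section CStar

variable {A E : Type*} [CStarAlgebra A] [PartialOrder A] [StarOrderedRing A]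
  [NormedAddCommGroup E] [Module A E] {ip : E → E → A}

theorem norm_ip_le (hip : IsLeftHilbertInner ip) (f g : E) : ‖ip f g‖ ≤ ‖f‖ * ‖g‖ := by
  let _ : Module ℂ E := Module.compHom E (algebraMap ℂ A)
  -- Mathlib's Hilbert C⋆-modules have the inner product linear in the second variable.
  let _ : CStarModule A E :=
    { inner x y := ip y x
      inner_add_right := hip.add_left _ _ _
      inner_self_nonneg := hip.ip_self_nonneg _
      inner_self := by
        intro x
        refine ⟨fun hx => norm_eq_zero.1 (by rw [hip.norm_eq_sqrt, hx, norm_zero, Real.sqrt_zero]),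
          fun hx => ?_⟩
        rw [hx, ← zero_smul A (0 : E), hip.smul_left, zero_mul]
      inner_op_smul_right := hip.smul_left _ _ _
      inner_smul_right_complex := by
        intro z x y
        exact (hip.smul_left _ _ _).trans (Algebra.smul_def z _).symm
      star_inner x y := hip.star_ip y x
      norm_eq_sqrt_norm_inner_self := hip.norm_eq_sqrt }
  rw [mul_comm]
  exact CStarModule.norm_inner_le E (x := g) (y := f)

theorem norm_ip_smul_sub_ip_smul_le (hip : IsLeftHilbertInner ip) (f a b : E) :
    ‖ip f a • a - ip f b • b‖ ≤ (‖a‖ + ‖b‖) * ‖a - b‖ * ‖f‖ := by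
  have h_split : ip f a • a - ip f b • b = ip f a • (a - b) + ip f (a - b) • b := by
    rw [smul_sub, hip.ip_sub_right, sub_smul]; abel
  calc ‖ip f a • a - ip f b • b‖
      ≤ ‖ip f a‖ * ‖a - b‖ + ‖ip f (a - b)‖ * ‖b‖ := by
        rw [h_split]
        exact (norm_add_le _ _).trans (add_le_add (hip.norm_smul_le _ _) (hip.norm_smul_le _ _))
    _ ≤ ‖f‖ * ‖a‖ * ‖a - b‖ + ‖f‖ * ‖a - b‖ * ‖b‖ := by
        gcongr
        · exact hip.norm_ip_le f a
        · exact hip.norm_ip_le f (a - b)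
    _ = (‖a‖ + ‖b‖) * ‖a - b‖ * ‖f‖ := by ring

theorem norm_frameOperator_sub_frameOperator_le (hip : IsLeftHilbertInner ip) {ι : Type*}
    [Fintype ι] (g g' : ι → E) (f : E) :
    ‖frameOperator ip g f - frameOperator ip g' f‖
      ≤ (∑ j, (‖g j‖ + ‖g' j‖) * ‖g j - g' j‖) * ‖f‖ := by
  rw [frameOperator, frameOperator, ← Finset.sum_sub_distrib, Finset.sum_mul]
  exact (norm_sum_le _ _).trans
    (Finset.sum_le_sum fun j _ => hip.norm_ip_smul_sub_ip_smul_le f (g j) (g' j))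

theorem frameOperator_bijective_of_parseval [CompleteSpace E] (hip : IsLeftHilbertInner ip)
    {ι : Type*} [Fintype ι] {g g' : ι → E}
    (h_parseval : ∀ f, frameOperator ip g f = f)
    (h_close : ∑ j, (‖g j‖ + ‖g' j‖) * ‖g j - g' j‖ < 1) :
    Function.Bijective (frameOperator ip g') := by
  have h_nonneg : 0 ≤ ∑ j, (‖g j‖ + ‖g' j‖) * ‖g j - g' j‖ := by positivity
  refine Function.bijective_of_lipschitzWith_id_sub (K := ⟨_, h_nonneg⟩) h_close
    (LipschitzWith.of_dist_le_mul fun x y => ?_)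
  have h_diff : x - frameOperator ip g' x - (y - frameOperator ip g' y)
      = frameOperator ip g (x - y) - frameOperator ip g' (x - y) := by
    rw [h_parseval, hip.frameOperator_sub, sub_sub_sub_comm]
  rw [dist_eq_norm, dist_eq_norm, h_diff]
  exact hip.norm_frameOperator_sub_frameOperator_le g g' (x - y)

end CStar

end IsLeftHilbertInner

theorem sum_norm_add_norm_mul_norm_sub_lt_one {E ι : Type*} [SeminormedAddCommGroup E]
    [Fintype ι] {g g' : ι → E} {M : ℝ} (hM : ∀ j, ‖g j‖ ≤ M)
    (h_close : ∀ j, ‖g j - g' j‖ < min 1 ((2 * M + 1) * Fintype.card ι)⁻¹) :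
    ∑ j, (‖g j‖ + ‖g' j‖) * ‖g j - g' j‖ < 1 := by
  rcases isEmpty_or_nonempty ι with hι | hι
  · simp
  have h_card : (0 : ℝ) < Fintype.card ι := Nat.cast_pos.2 Fintype.card_pos
  have h_const : 0 < 2 * M + 1 := by
    obtain ⟨j₀⟩ := hι
    linarith [norm_nonneg (g j₀), hM j₀]
  have h_term : ∀ j, (‖g j‖ + ‖g' j‖) * ‖g j - g' j‖ < (Fintype.card ι : ℝ)⁻¹ := fun j => by
    have h_g' : ‖g' j‖ ≤ M + 1 := by
      linarith [norm_le_norm_add_norm_sub (g j) (g' j), hM j,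
        (h_close j).trans_le (min_le_left _ _)]
    calc (‖g j‖ + ‖g' j‖) * ‖g j - g' j‖ ≤ (2 * M + 1) * ‖g j - g' j‖ := by
          gcongr ?_ * _; linarith [hM j]
      _ < (2 * M + 1) * ((2 * M + 1) * Fintype.card ι)⁻¹ :=
          mul_lt_mul_of_pos_left ((h_close j).trans_le (min_le_right _ _)) h_const
      _ = (Fintype.card ι : ℝ)⁻¹ := by field_simp
  calc ∑ j, (‖g j‖ + ‖g' j‖) * ‖g j - g' j‖ < ∑ _j : ι, (Fintype.card ι : ℝ)⁻¹ :=
        Finset.sum_lt_sum_of_nonempty Finset.univ_nonempty fun j _ => h_term j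
    _ = 1 := by simp [h_card.ne']

theorem parseval_frame_perturbation_general {A E : Type*}
    [NormedRing A] [StarRing A] [CStarRing A]
    [NormedAlgebra ℂ A] [CompleteSpace A] [PartialOrder A] [StarOrderedRing A]
    [NormedAddCommGroup E] [Module A E] [CompleteSpace E]
    (ip : E → E → A)
    (h_add : ∀ f g h : E, ip (f + g) h = ip f h + ip g h)
    (h_smul : ∀ (c : A) (f g : E), ip (c • f) g = c * ip f g)
    (h_star : ∀ f g : E, star (ip f g) = ip g f)
    (h_pos : ∀ f : E, 0 ≤ ip f f)
    (h_norm : ∀ f : E, ‖f‖ = Real.sqrt ‖ip f f‖)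
    (n : ℕ) (g g' : Fin n → E) (M : ℝ)
    (hM : M = ⨆ j : Fin n, ‖g j‖)
    (h_parseval : ∀ f : E, ∑ j, ip f (g j) • g j = f)
    (h_close : ∀ j : Fin n, ‖g j - g' j‖ < min 1 (((2 * M + 1) * n)⁻¹)) :
    Function.Bijective (fun f : E => ∑ j, ip f (g' j) • g' j) ∧
      ∀ f : E, ∃ c : Fin n → A, f = ∑ j, c j • g' j := by
  let _ : CStarAlgebra A :=
    { ‹NormedRing A›, ‹StarRing A›, ‹CStarRing A›, ‹NormedAlgebra ℂ A›, ‹CompleteSpace A›,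
      starModule_complex_of_starOrderedRing with }
  have hip : IsLeftHilbertInner ip := ⟨h_add, h_smul, h_star, h_pos, h_norm⟩
  have hM_le : ∀ j, ‖g j‖ ≤ M := fun j =>
    hM ▸ le_ciSup (f := fun j => ‖g j‖) (Set.finite_range _).bddAbove j
  have h_bij : Function.Bijective (frameOperator ip g') :=
    hip.frameOperator_bijective_of_parseval h_parseval
      (sum_norm_add_norm_mul_norm_sub_lt_one hM_le (by simpa using h_close))
  refine ⟨h_bij, fun f => ?_⟩
  obtain ⟨h, rfl⟩ := h_bij.2 f
  exact ⟨fun j => ip h (g' j), rfl⟩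

/-- Perturbation of a Parseval frame in a Hilbert `A`-module: if `{g₁, …, gₙ}` has
frame operator equal to the identity and `g₁', …, gₙ'` satisfy `‖gⱼ − gⱼ'‖ < δ`
with `δ = min {1, ((2M+1)n)⁻¹}` and `M = max ⱼ ‖gⱼ‖`, then the frame operator
`S' f = ∑ⱼ ⟨f, gⱼ'⟩·gⱼ'` is invertible, and hence `{g₁', …, gₙ'}` is a generating
set for `E`. -/
theorem parseval_frame_perturbation {A E : Type*}
    [NormedRing A] [StarRing A] [CStarRing A]
    [NormedAlgebra ℂ A] [CompleteSpace A] [PartialOrder A] [StarOrderedRing A]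
    [NormedAddCommGroup E] [Module A E] [CompleteSpace E]
    (ip : E → E → A)
    (h_add : ∀ f g h : E, ip (f + g) h = ip f h + ip g h)
    (h_smul : ∀ (c : A) (f g : E), ip (c • f) g = c * ip f g)
    (h_star : ∀ f g : E, star (ip f g) = ip g f)
    (h_pos : ∀ f : E, 0 ≤ ip f f)
    (h_def : ∀ f : E, ip f f = 0 → f = 0)
    (h_norm : ∀ f : E, ‖f‖ = Real.sqrt ‖ip f f‖)
    (n : ℕ) (g g' : Fin n → E) (M : ℝ)
    (hM : M = ⨆ j : Fin n, ‖g j‖)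
    (h_parseval : ∀ f : E, ∑ j, ip f (g j) • g j = f)
    (h_close : ∀ j : Fin n, ‖g j - g' j‖ < min 1 (((2 * M + 1) * n)⁻¹)) :
    Function.Bijective (fun f : E => ∑ j, ip f (g' j) • g' j) ∧
      ∀ f : E, ∃ c : Fin n → A, f = ∑ j, c j • g' j :=
  parseval_frame_perturbation_general ip h_add h_smul h_star h_pos h_norm n g g' M hM h_parseval
    h_close
end

section
/- Let A be a unital C*-algebra and E a Hilbert A-module. A finite set {g₁,…,gₙ} ⊆ E is a generating set for E (i.e., its A-span is all of E) if and only if the associated frame operator S : E → E, Sf = ∑_{j=1}^n ⟨f,g_j⟩g_j, is invertible in the C*-algebra of adjointable operators L_A(E). -/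
/-!
Write the frame operator as `S = T T*`, where `T : Aⁿ → E` is the synthesis map `c ↦ ∑ cⱼ gⱼ`
and `T* f = (⟨f, gⱼ⟩)ⱼ`. If the `gⱼ` generate `E`, then `T` is onto, so by the open mapping
theorem every `f` is some `T c` with `‖c‖ ≤ C ‖f‖`. Since `⟨f, f⟩ = ⟨c, T* f⟩`, the
Cauchy–Schwarz inequality in `Aⁿ` gives `⟨f, f⟩² ≤ C² ‖f‖² ⟨S f, f⟩`, while
`⟨S f, S f⟩ ≤ M ⟨S f, f⟩` holds for a crude constant `M`. Expanding
`⟨f - S f / M, f - S f / M⟩` with these two `A`-valued bounds and applying the functional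
calculus to `⟨f, f⟩` yields `‖1 - S / M‖ < 1`, so `S` is invertible by the Neumann series.
Conversely, if `S` is onto then `f = S w = ∑ ⟨w, gⱼ⟩ gⱼ`.
-/

section StarOrderedRing

variable {R : Type*} [Ring R] [PartialOrder R] [StarRing R] [StarOrderedRing R]

theorem eq_one_of_nonneg_of_mul_self_eq_one [IsAddTorsionFree R] {p : R} (hp : 0 ≤ p)
    (hpp : p * p = 1) : p = 1 := by
  set x := 1 - p with hx
  have hpx : p * x = -x := by rw [hx, mul_sub, mul_one, hpp, neg_sub]
  have hxx : x * x = x + x := by rw [hx, sub_mul, one_mul, ← hx, hpx]; abel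
  have hxsa : star x = x := by rw [hx, star_sub, star_one, (IsSelfAdjoint.of_nonneg hp).star_eq]
  have h_nonneg : 0 ≤ x + x := by simpa [hxsa, hxx] using star_mul_self_nonneg x
  have h_nonpos : x + x ≤ 0 := by
    have := star_left_conjugate_nonneg hp x
    rwa [hxsa, mul_assoc, hpx, mul_neg, hxx, neg_nonneg] at this
  have h2x : 2 • x = 2 • (0 : R) := by
    rw [two_nsmul, smul_zero]; exact le_antisymm h_nonpos h_nonneg
  exact (sub_eq_zero.mp (nsmul_right_injective two_ne_zero h2x)).symm

theorem star_algebraMap_I [Algebra ℂ R] :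
    star (algebraMap ℂ R Complex.I) = -algebraMap ℂ R Complex.I := by
  set u := algebraMap ℂ R Complex.I
  have huu : u * u = -1 := by rw [← map_mul, Complex.I_mul_I, map_neg, map_one]
  have hp : u * star u = 1 := by
    have := IsAddTorsionFree.of_isTorsionFree ℂ R
    refine eq_one_of_nonneg_of_mul_self_eq_one (mul_star_self_nonneg u) ?_
    calc u * star u * (u * star u) = u * u * star (u * u) := by
          rw [star_mul, mul_assoc, ← mul_assoc (star u), ← Algebra.commutes Complex.I (star u)]
          noncomm_ring
      _ = 1 := by rw [huu, star_neg, star_one]; noncomm_ring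
  calc star u = -(u * u) * star u := by rw [huu, neg_neg, one_mul]
    _ = -u := by rw [neg_mul, mul_assoc, hp, mul_one]

end StarOrderedRing

/-- The order is essential: `ℂ` with the trivial involution is a C⋆-ring over itself. -/
theorem starModule_complex_of_starOrderedRing_s11 {A : Type*} [NormedRing A] [StarRing A]
    [ContinuousStar A] [NormedAlgebra ℂ A] [PartialOrder A] [StarOrderedRing A] :
    StarModule ℂ A := by
  have star_real_smul (r : ℝ) (a : A) : star (r • a) = r • star a :=
    map_real_smul (starAddEquiv : A ≃+ A).toAddMonoidHom continuous_star r a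
  have star_I_smul (a : A) : star (Complex.I • a) = -(Complex.I • star a) := by
    rw [Algebra.smul_def, star_mul, star_algebraMap_I, mul_neg, Algebra.smul_def,
      Algebra.commutes]
  refine ⟨fun z a => ?_⟩
  conv_lhs => rw [← Complex.re_add_im z]
  rw [add_smul, mul_smul, star_add, Complex.coe_smul, Complex.coe_smul, star_real_smul,
    star_real_smul, star_I_smul, Complex.star_def, ← Complex.re_add_im ((starRingEnd ℂ) z)]
  simp only [Complex.conj_re, Complex.conj_im, Complex.ofReal_neg, neg_mul, neg_smul, add_smul,
    mul_smul, Complex.coe_smul, smul_neg]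

theorem CStarAlgebra.smul_sub_smul_mul_self_le {A : Type*} [CStarAlgebra A] [PartialOrder A]
    [StarOrderedRing A] {a : A} (ha : IsSelfAdjoint a) {N β : ℝ} (hN : ‖a‖ ≤ N)
    (hβ : β ≤ 1 / 2) : N • a - β • (a * a) ≤ algebraMap ℝ A ((1 - β) * N ^ 2) := by
  nontriviality A
  have hcfc : cfc (fun r : ℝ => N * r - β * (r * r)) a = N • a - β • (a * a) := by
    rw [cfc_sub _ _ a, cfc_const_mul _ _ a, cfc_const_mul _ _ a, cfc_mul _ _ a, cfc_id' ℝ a]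
  rw [← hcfc]
  refine cfc_le_algebraMap _ _ a fun r hr => ?_
  have hr : |r| ≤ N := by simpa using (spectrum.norm_le_norm_of_mem hr).trans hN
  obtain ⟨hr₁, hr₂⟩ := abs_le.mp hr
  -- `(1 - β) N² - (N r - β r²) = (N - r) ((1 - β) N - β r)`, and both factors are `≥ 0`.
  nlinarith [mul_nonneg (sub_nonneg.mpr hr₂) (by nlinarith : 0 ≤ (1 - β) * N - β * r)]

theorem ContinuousLinearMap.bijective_of_norm_sub_smul_apply_le {𝕜 E : Type*}
    [NontriviallyNormedField 𝕜] [NormedAddCommGroup E] [NormedSpace 𝕜 E] [CompleteSpace E]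
    (S : E →L[𝕜] E) {t : 𝕜} (ht : t ≠ 0) {r : ℝ} (hr₀ : 0 ≤ r) (hr₁ : r < 1)
    (hS : ∀ x, ‖x - t • S x‖ ≤ r * ‖x‖) : Function.Bijective S := by
  have hnorm : ‖1 - t • S‖ < 1 := (opNorm_le_bound _ hr₀ hS).trans_lt hr₁
  have hunit : IsUnit ((Units.mk0 t ht) • S) := by
    simpa using isUnit_one_sub_of_norm_lt_one hnorm
  exact isUnit_iff_bijective.mp ((isUnit_smul_iff _ _).mp hunit)

open scoped InnerProductSpace
open WithCStarModule

namespace CStarModule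

variable {A E : Type*} [CStarAlgebra A] [PartialOrder A] [StarOrderedRing A]
  [NormedAddCommGroup E] [NormedSpace ℂ E] [Module A E] [CStarModule A E]

theorem inner_sum_self_le {ι : Type*} (s : Finset ι) (v : ι → E) :
    ⟪∑ i ∈ s, v i, ∑ i ∈ s, v i⟫_A ≤ s.card • ∑ i ∈ s, ⟪v i, v i⟫_A := by
  -- `∑ᵢ ∑ⱼ ⟪vᵢ - vⱼ, vᵢ - vⱼ⟫_A` is twice the difference of the two sides.
  have h := Finset.sum_nonneg fun i (_ : i ∈ s) => Finset.sum_nonneg fun j (_ : j ∈ s) =>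
    inner_self_nonneg (A := A) (x := v i - v j)
  simp only [inner_sub_left, inner_sub_right, Finset.sum_sub_distrib, Finset.sum_const,
    ← inner_sum_left, ← inner_sum_right, ← Finset.smul_sum] at h
  rw [← sub_nonneg]
  have h2 : (0 : A) ≤
      (2 : ℝ) • (s.card • ∑ i ∈ s, ⟪v i, v i⟫_A - ⟪∑ i ∈ s, v i, ∑ i ∈ s, v i⟫_A) := by
    rw [two_smul]; convert h using 1; abel
  simpa using smul_nonneg (by norm_num : (0 : ℝ) ≤ 1 / 2) h2

theorem inner_smul_self_le (a : A) (x : E) :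
    ⟪a • x, a • x⟫_A ≤ ‖x‖ ^ 2 • (a * star a) := by
  rw [inner_op_smul_right, inner_op_smul_left, ← mul_assoc, norm_sq_eq A]
  exact CStarAlgebra.star_right_conjugate_le_norm_smul

protected theorem norm_smul_le (a : A) (x : E) : ‖a • x‖ ≤ ‖a‖ * ‖x‖ := by
  refine (pow_le_pow_iff_left₀ (norm_nonneg _) (by positivity) two_ne_zero).mp ?_
  calc ‖a • x‖ ^ 2 = ‖⟪a • x, a • x⟫_A‖ := norm_sq_eq A
    _ ≤ ‖‖x‖ ^ 2 • (a * star a)‖ :=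
      CStarAlgebra.norm_le_norm_of_nonneg_of_le inner_self_nonneg (inner_smul_self_le a x)
    _ = (‖a‖ * ‖x‖) ^ 2 := by
      rw [norm_smul, CStarRing.norm_self_mul_star, Real.norm_of_nonneg (by positivity)]; ring

theorem inner_sub_inv_smul_self_le {f s : E} {P : A} {M : ℝ} (hfs : ⟪f, s⟫_A = P)
    (hsf : ⟪s, f⟫_A = P) (hs : ⟪s, s⟫_A ≤ M • P) (hM : 0 < M) :
    ⟪f - M⁻¹ • s, f - M⁻¹ • s⟫_A ≤ ⟪f, f⟫_A - M⁻¹ • P := by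
  have hexpand : ⟪f - M⁻¹ • s, f - M⁻¹ • s⟫_A
      = ⟪f, f⟫_A - M⁻¹ • P - M⁻¹ • P + (M⁻¹ * M⁻¹) • ⟪s, s⟫_A := by
    simp only [inner_sub_left, inner_sub_right, inner_smul_left_real, inner_smul_right_real,
      hfs, hsf, smul_sub, smul_smul]
    abel
  have hss : (M⁻¹ * M⁻¹) • ⟪s, s⟫_A ≤ M⁻¹ • P := by
    calc (M⁻¹ * M⁻¹) • ⟪s, s⟫_A ≤ (M⁻¹ * M⁻¹) • (M • P) := by gcongr
      _ = M⁻¹ • P := by rw [smul_smul, mul_assoc, inv_mul_cancel₀ hM.ne', mul_one]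
  rw [hexpand]
  calc _ ≤ ⟪f, f⟫_A - M⁻¹ • P - M⁻¹ • P + M⁻¹ • P := by gcongr
    _ = _ := by abel

theorem norm_sub_inv_smul_sq_le {f s : E} {P : A} {M κ : ℝ} (hfs : ⟪f, s⟫_A = P)
    (hsf : ⟪s, f⟫_A = P) (hs : ⟪s, s⟫_A ≤ M • P)
    (hf : ⟪f, f⟫_A * ⟪f, f⟫_A ≤ (κ * ‖f‖ ^ 2) • P) (hM : 0 < M) (hMκ : 2 ≤ M * κ) :
    ‖f - M⁻¹ • s‖ ^ 2 ≤ (1 - (M * κ)⁻¹) * ‖f‖ ^ 2 := by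
  have hQ := inner_sub_inv_smul_self_le hfs hsf hs hM
  rw [norm_sq_eq A (x := f - M⁻¹ • s)]
  rcases eq_or_ne f 0 with rfl | hf0
  · have hP : P = 0 := by rw [← hfs, inner_zero_left]
    rw [inner_zero_left, hP, smul_zero, sub_zero] at hQ
    rw [le_antisymm hQ inner_self_nonneg]
    simp
  have : Nontrivial A := ⟨⟨⟪f, f⟫_A, 0, mt inner_self.mp hf0⟩⟩
  set N := ‖f‖ ^ 2
  have hNpos : 0 < N := by positivity
  have hκ : 0 < κ := pos_of_mul_pos_right (by linarith) hM.le
  set β := (M * κ)⁻¹ with hβ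
  have hβhalf : β ≤ 1 / 2 := by rw [hβ, one_div]; exact inv_anti₀ two_pos hMκ
  have hff : β • (⟪f, f⟫_A * ⟪f, f⟫_A) ≤ (N * M⁻¹) • P := by
    calc β • (⟪f, f⟫_A * ⟪f, f⟫_A) ≤ β • ((κ * N) • P) := by gcongr
      _ = (N * M⁻¹) • P := by rw [smul_smul, hβ]; congr 1; field_simp
  have hNQ : N • ⟪f - M⁻¹ • s, f - M⁻¹ • s⟫_A ≤ algebraMap ℝ A ((1 - β) * N ^ 2) :=
    calc N • ⟪f - M⁻¹ • s, f - M⁻¹ • s⟫_A ≤ N • (⟪f, f⟫_A - M⁻¹ • P) := by gcongr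
      _ ≤ N • ⟪f, f⟫_A - β • (⟪f, f⟫_A * ⟪f, f⟫_A) := by
        rw [smul_sub, smul_smul]; gcongr
      _ ≤ _ := CStarAlgebra.smul_sub_smul_mul_self_le isSelfAdjoint_inner_self
        (norm_sq_eq A).ge hβhalf
  have := CStarAlgebra.norm_le_norm_of_nonneg_of_le (smul_nonneg hNpos.le inner_self_nonneg) hNQ
  rw [norm_smul, norm_algebraMap', Real.norm_of_nonneg hNpos.le,
    Real.norm_of_nonneg (by nlinarith)] at this
  nlinarith

variable {ι : Type*} [Fintype ι]

variable (A) in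
noncomputable def analysis (g : ι → E) : E →L[ℂ] C⋆ᵐᵒᵈ(A, ι → A) :=
  LinearMap.mkContinuous
    { toFun f := (WithCStarModule.equiv A (ι → A)).symm fun i => ⟪g i, f⟫_A
      map_add' f h := by ext i; simp
      map_smul' z f := by ext i; simp }
    (∑ i, ‖g i‖) fun f => by
      refine (pi_norm_le_sum_norm _).trans ?_
      rw [Finset.sum_mul]
      exact Finset.sum_le_sum fun i _ => norm_inner_le E

variable [IsScalarTower ℂ A E]

variable (A) in
noncomputable def synthesis (g : ι → E) : C⋆ᵐᵒᵈ(A, ι → A) →L[ℂ] E :=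
  LinearMap.mkContinuous
    { toFun c := ∑ i, c i • g i
      map_add' c d := by simp [add_smul, Finset.sum_add_distrib]
      map_smul' z c := by simp [Finset.smul_sum, smul_assoc] }
    (∑ i, ‖g i‖) fun c => by
      calc ‖∑ i, c i • g i‖ ≤ ∑ i, ‖c i‖ * ‖g i‖ :=
            norm_sum_le_of_le _ fun i _ => CStarModule.norm_smul_le _ _
        _ ≤ ∑ i, ‖c‖ * ‖g i‖ := by gcongr with i; exact norm_apply_le_norm c i
        _ = (∑ i, ‖g i‖) * ‖c‖ := by rw [← Finset.mul_sum, mul_comm]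

variable (A) in
noncomputable def frameOperator (g : ι → E) : E →L[ℂ] E := synthesis A g ∘L analysis A g

theorem inner_synthesis_left (g : ι → E) (c : C⋆ᵐᵒᵈ(A, ι → A)) (f : E) :
    ⟪synthesis A g c, f⟫_A = ⟪c, analysis A g f⟫_A := by
  simp [synthesis, analysis, pi_inner, inner_def]

theorem inner_frameOperator_left (g : ι → E) (f : E) :
    ⟪frameOperator A g f, f⟫_A = ⟪analysis A g f, analysis A g f⟫_A :=
  inner_synthesis_left g _ f

theorem inner_synthesis_self_le (g : ι → E) (c : C⋆ᵐᵒᵈ(A, ι → A)) :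
    ⟪synthesis A g c, synthesis A g c⟫_A ≤ (Fintype.card ι * ∑ i, ‖g i‖ ^ 2) • ⟪c, c⟫_A := by
  calc ⟪synthesis A g c, synthesis A g c⟫_A ≤ Fintype.card ι • ∑ i, ⟪c i • g i, c i • g i⟫_A :=
        inner_sum_self_le _ _
    _ ≤ Fintype.card ι • ∑ i, (∑ j, ‖g j‖ ^ 2) • (c i * star (c i)) := by
      gcongr with i
      refine (inner_smul_self_le _ _).trans
        (smul_le_smul_of_nonneg_right ?_ (mul_star_self_nonneg _))
      exact Finset.single_le_sum (f := fun j => ‖g j‖ ^ 2) (fun j _ => by positivity)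
        (Finset.mem_univ i)
    _ = _ := by
      rw [pi_inner, ← Finset.smul_sum, ← Nat.cast_smul_eq_nsmul ℝ, smul_smul]
      simp only [inner_def]

theorem inner_self_mul_inner_self_le (g : ι → E) {c : C⋆ᵐᵒᵈ(A, ι → A)} {f : E}
    (hc : synthesis A g c = f) :
    ⟪f, f⟫_A * ⟪f, f⟫_A ≤ ‖c‖ ^ 2 • ⟪analysis A g f, analysis A g f⟫_A := by
  have hcf : ⟪c, analysis A g f⟫_A = ⟪f, f⟫_A := by rw [← inner_synthesis_left, hc]
  have hfc : ⟪analysis A g f, c⟫_A = ⟪f, f⟫_A := by rw [← star_inner c, hcf, star_inner]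
  have := inner_mul_inner_swap_le (A := A) (x := c) (y := analysis A g f)
  rwa [hcf, hfc] at this

theorem norm_sub_inv_smul_frameOperator_sq_le (g : ι → E) {c : C⋆ᵐᵒᵈ(A, ι → A)} {f : E}
    (hc : synthesis A g c = f) {M κ : ℝ} (hgM : Fintype.card ι * ∑ i, ‖g i‖ ^ 2 ≤ M)
    (hcκ : ‖c‖ ^ 2 ≤ κ * ‖f‖ ^ 2) (hM : 0 < M) (hMκ : 2 ≤ M * κ) :
    ‖f - M⁻¹ • frameOperator A g f‖ ^ 2 ≤ (1 - (M * κ)⁻¹) * ‖f‖ ^ 2 :=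
  norm_sub_inv_smul_sq_le
    (by rw [← star_inner, inner_frameOperator_left, star_inner])
    (inner_frameOperator_left g f)
    ((inner_synthesis_self_le g _).trans (smul_le_smul_of_nonneg_right hgM inner_self_nonneg))
    ((inner_self_mul_inner_self_le g hc).trans
      (smul_le_smul_of_nonneg_right hcκ inner_self_nonneg)) hM hMκ

variable [CompleteSpace E]

theorem generating_iff_bijective_frameOperator (g : ι → E) :
    (∀ f : E, ∃ c : ι → A, f = ∑ i, c i • g i) ↔ Function.Bijective (frameOperator A g) := by
  refine ⟨fun hgen => ?_, fun hbij f => ?_⟩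
  · obtain ⟨C, -, hC⟩ := (synthesis A g).exists_preimage_norm_le fun f => by
      obtain ⟨c, hc⟩ := hgen f
      exact ⟨(WithCStarModule.equiv A _).symm c, hc.symm⟩
    -- Enlarged so that `0 < M` and `2 ≤ M * κ`.
    set M : ℝ := Fintype.card ι * ∑ i, ‖g i‖ ^ 2 + 1
    set κ : ℝ := C ^ 2 + 2
    have hM : 1 ≤ M := le_add_of_nonneg_left (by positivity)
    have hMκ : 2 ≤ M * κ := by nlinarith [sq_nonneg C]
    set r : ℝ := 1 - (M * κ)⁻¹
    have hr₀ : 0 ≤ r := sub_nonneg.mpr (inv_le_one_of_one_le₀ (by linarith))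
    have hr₁ : r < 1 := sub_lt_self _ (inv_pos.mpr (by linarith))
    have hcontr (f : E) : ‖f - (M⁻¹ : ℂ) • frameOperator A g f‖ ≤ √r * ‖f‖ := by
      obtain ⟨c, hc, hcf⟩ := hC f
      have hsq := norm_sub_inv_smul_frameOperator_sq_le g hc (le_add_of_nonneg_right zero_le_one)
        (by nlinarith [norm_nonneg c, norm_nonneg f] : ‖c‖ ^ 2 ≤ κ * ‖f‖ ^ 2) (by linarith) hMκ
      rw [← Complex.ofReal_inv, Complex.coe_smul]
      refine (pow_le_pow_iff_left₀ (norm_nonneg _) (by positivity) two_ne_zero).mp ?_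
      rwa [mul_pow, Real.sq_sqrt hr₀]
    exact (frameOperator A g).bijective_of_norm_sub_smul_apply_le
      (by exact_mod_cast (inv_pos.mpr (by linarith : (0 : ℝ) < M)).ne') (Real.sqrt_nonneg r)
      ((Real.sqrt_lt' one_pos).mpr (by rwa [one_pow])) hcontr
  · obtain ⟨w, hw⟩ := hbij.2 f
    exact ⟨fun i => ⟪g i, w⟫_A, hw.symm⟩

end CStarModule

/-- Mathlib's C⋆-modules take the inner product `A`-linear in the second variable, so `ip` enters
with its arguments swapped. -/
abbrev CStarModule.ofLeftInner {A E : Type*} [Ring A] [StarRing A] [Algebra ℂ A]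
    [Norm A] [PartialOrder A] [AddCommGroup E] [Norm E] [Module ℂ E] [Module A E]
    [IsScalarTower ℂ A E] (ip : E → E → A)
    (h_add : ∀ f g h : E, ip (f + g) h = ip f h + ip g h)
    (h_smul : ∀ (c : A) (f g : E), ip (c • f) g = c * ip f g)
    (h_star : ∀ f g : E, star (ip f g) = ip g f)
    (h_pos : ∀ f : E, 0 ≤ ip f f)
    (h_def : ∀ f : E, ip f f = 0 → f = 0)
    (h_norm : ∀ f : E, ‖f‖ = Real.sqrt ‖ip f f‖) : CStarModule A E where
  inner x y := ip y x
  inner_add_right := h_add _ _ _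
  inner_self_nonneg := h_pos _
  inner_self := ⟨h_def _, by rintro rfl; simpa using h_smul 0 0 0⟩
  inner_op_smul_right := h_smul _ _ _
  inner_smul_right_complex {z x y} := by
    rw [← smul_one_smul A z y, h_smul, smul_one_mul]
  star_inner x y := h_star y x
  norm_eq_sqrt_norm_inner_self := h_norm

/-- A finite set `{g₁, …, gₙ}` in a Hilbert `A`-module `E` is a generating set
(its `A`-span is all of `E`) if and only if the frame operator
`S f = ∑ⱼ ⟨f, gⱼ⟩·gⱼ` is invertible in the adjointable operators on `E`. -/
theorem generating_iff_frame_operator_invertible {A E : Type*}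
    [NormedRing A] [StarRing A] [CStarRing A]
    [NormedAlgebra ℂ A] [CompleteSpace A] [PartialOrder A] [StarOrderedRing A]
    [NormedAddCommGroup E] [Module A E] [CompleteSpace E]
    (ip : E → E → A)
    (h_add : ∀ f g h : E, ip (f + g) h = ip f h + ip g h)
    (h_smul : ∀ (c : A) (f g : E), ip (c • f) g = c * ip f g)
    (h_star : ∀ f g : E, star (ip f g) = ip g f)
    (h_pos : ∀ f : E, 0 ≤ ip f f)
    (h_def : ∀ f : E, ip f f = 0 → f = 0)
    (h_norm : ∀ f : E, ‖f‖ = Real.sqrt ‖ip f f‖)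
    (n : ℕ) (g : Fin n → E) :
    (∀ f : E, ∃ c : Fin n → A, f = ∑ j, c j • g j) ↔
      Function.Bijective (fun f : E => ∑ j, ip f (g j) • g j) := by
  have : StarModule ℂ A := starModule_complex_of_starOrderedRing_s11
  let : CStarAlgebra A := {}
  let : Module ℂ E := Module.compHom E (algebraMap ℂ A)
  have : IsScalarTower ℂ A E := IsScalarTower.of_compHom ℂ A E
  let : CStarModule A E := .ofLeftInner ip h_add h_smul h_star h_pos h_def h_norm
  let : NormedSpace ℂ E := .ofCore (CStarModule.normedSpaceCore A)
  exact CStarModule.generating_iff_bijective_frameOperator g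
end
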